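/- Let G = (V,E) be a locally finite simple graph, t ∈ ℕ, and let m, m' ∈ ℕ satisfy |B(x,2t+1)| ≤ m and |B(x,t+1)| ≤ m' for every x ∈ V. Then for every S ⊆ V and every finite W ⊆ V, the number of t-trifurcations of S lying in W is at most m · m' · |∂W|. -/

import Mathlib

/-- The closed ball of radius `t` around `x` in the graph `G`. -/
def GraphBall {V : Type*} (G : SimpleGraph V) (x : V) (t : ℕ) : Set V :=
  {y | G.edist x y ≤ t}

/-- The inner vertex boundary of a set `A`. -/
def InnerBoundary {V : Type*} (G : SimpleGraph V) (A : Set V) : Set V :=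
  {x ∈ A | ∃ y, y ∉ A ∧ G.Adj x y}

/-- The connected component of `x` in the subgraph of `G` induced on `S`,
viewed as a subset of `V` (empty if `x ∉ S`). -/
def Comp {V : Type*} (G : SimpleGraph V) (S : Set V) (x : V) : Set V :=
  {y | ∃ (hx : x ∈ S) (hy : y ∈ S), (G.induce S).Reachable ⟨x, hx⟩ ⟨y, hy⟩}

/-- The subgraph of `G` induced on `S` has at least `n` infinite connected
components. -/
def AtLeastInfComps {V : Type*} (G : SimpleGraph V) (S : Set V) (n : ℕ) : Prop :=
  ∃ f : Fin n → V, (∀ i, f i ∈ S ∧ (Comp G S (f i)).Infinite) ∧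
    Function.Injective (fun i => Comp G S (f i))

/-- `x` is a `t`-trifurcation of `S`: it lies in an infinite component `C` of `S`
and the subgraph induced on `C \ C_{x,t}(S)` has at least `3` infinite components. -/
def IsTrifurcation {V : Type*} (G : SimpleGraph V) (S : Set V) (t : ℕ) (x : V) : Prop :=
  x ∈ S ∧ (Comp G S x).Infinite ∧
    AtLeastInfComps G (Comp G S x \ Comp G (S ∩ GraphBall G x t) x) 3

/-!
The trifurcations in `W` are covered by the `2t`-balls around a maximal `2t`-separated subset `A`
of them, which costs the factor `m`; the points of `A` have disjoint cores. A point of `A` whose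
`(t+1)`-ball leaves `W` lies within distance `t + 1` of `∂W`, and the `(t+1)`-ball of a boundary
point contains at most `m' - 1` points of `W`. The remaining points of `A` inject into `∂W` by
the Burton–Keane argument: each picks an infinite branch (a component of its cluster minus its
core) meeting as few points of `A` as possible; these branches form a laminar family, and each
point is sent to a boundary vertex of its branch lying outside all the branches nested in it.
-/

namespace Set

variable {α ι : Type*}

lemma ncard_inter_lt_of_subset_of_mem {T A B : Set α} {x : α} (hT : T.Finite) (hAB : A ⊆ B)
    (hxT : x ∈ T) (hxB : x ∈ B) (hxA : x ∉ A) : (T ∩ A).ncard < (T ∩ B).ncard :=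
  ncard_lt_ncard ((ssubset_iff_of_subset (inter_subset_inter_right T hAB)).2
    ⟨x, ⟨hxT, hxB⟩, fun h => hxA h.2⟩) (hT.inter_of_left B)

lemma ncard_le_mul_ncard_of_subset_biUnion {X : Set α} {Y : Set ι}
    {F : ι → Set α} {k : ℕ} (hY : Y.Finite) (hF : ∀ y ∈ Y, (F y).Finite)
    (hk : ∀ y ∈ Y, (F y).ncard ≤ k) (hX : X ⊆ ⋃ y ∈ Y, F y) : X.ncard ≤ k * Y.ncard := by
  calc X.ncard ≤ (⋃ y ∈ Y, F y).ncard := ncard_le_ncard hX (hY.biUnion hF)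
    _ ≤ ∑ y ∈ hY.toFinset, (F y).ncard := by
      simpa using hY.toFinset.set_ncard_biUnion_le F
    _ ≤ hY.toFinset.card • k :=
      Finset.sum_le_card_nsmul _ _ _ fun y hy => hk y (hY.mem_toFinset.1 hy)
    _ = k * Y.ncard := by rw [ncard_eq_toFinset_card _ hY, smul_eq_mul, mul_comm]

lemma Finite.exists_maximal_separated {r : α → α → Prop}
    (hsymm : ∀ a b, r a b → r b a) (hrefl : ∀ a, r a a) {T : Set α} (hT : T.Finite) :
    ∃ A ⊆ T, A.Pairwise (fun a b => ¬r a b) ∧ ∀ y ∈ T, ∃ a ∈ A, r a y := by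
  obtain ⟨A, ⟨hAT, hAsep⟩, hmax⟩ :=
    (hT.finite_subsets.subset fun A (h : _ ∧ _) => h.1).exists_maximal
      (s := {A | A ⊆ T ∧ A.Pairwise fun a b => ¬r a b}) ⟨∅, empty_subset T, pairwise_empty _⟩
  refine ⟨A, hAT, hAsep, fun y hy => ?_⟩
  by_contra! hfar
  have hins : insert y A ⊆ A := hmax ⟨insert_subset hy hAT,
    pairwise_insert.2 ⟨hAsep, fun a ha _ =>
      ⟨fun hya => hfar a ha (hsymm y a hya), hfar a ha⟩⟩⟩ (subset_insert y A)
  exact hfar y (hins (mem_insert y A)) (hrefl y)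

end Set

lemma Fin.exists_not_and_not {P Q : Fin 3 → Prop} (hP : ∀ i j, P i → P j → i = j)
    (hQ : ∀ i j, Q i → Q j → i = j) : ∃ i, ¬P i ∧ ¬Q i := by
  by_contra! h
  have := hP 0 1; have := hP 0 2; have := hP 1 2
  have := hQ 0 1; have := hQ 0 2; have := hQ 1 2
  have := h 0; have := h 1; have := h 2
  simp only [Fin.reduceEq, imp_false] at *
  tauto

namespace BurtonKeane

open Set

variable {V : Type*} {G : SimpleGraph V}

variable (G) in
/-- Paths inside `S`; note that `Conn G S x x` holds even when `x ∉ S`. -/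
def Conn (S : Set V) : V → V → Prop :=
  Relation.ReflTransGen fun a b => a ∈ S ∧ b ∈ S ∧ G.Adj a b

section Components

variable {S S' A W : Set V} {x y z w : V}

lemma Conn.symm (h : Conn G S x y) : Conn G S y x := by
  induction h with
  | refl => exact .refl
  | tail _ hbc ih => exact ih.head ⟨hbc.2.1, hbc.1, hbc.2.2.symm⟩

lemma Conn.mono (hS : S ⊆ S') (h : Conn G S x y) : Conn G S' x y :=
  Relation.ReflTransGen.mono (fun _ _ ⟨ha, hb, hab⟩ => ⟨hS ha, hS hb, hab⟩) _ _ h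

lemma mem_comp_iff (hx : x ∈ S) : y ∈ Comp G S x ↔ Conn G S x y := by
  constructor
  · rintro ⟨_, _, hr⟩
    rw [SimpleGraph.reachable_iff_reflTransGen] at hr
    exact hr.lift Subtype.val fun a b hab => ⟨a.2, b.2, hab⟩
  · intro h
    induction h with
    | refl => exact ⟨hx, hx, .refl _⟩
    | tail _ hbc ih =>
      obtain ⟨_, _, hr⟩ := ih
      exact ⟨hx, hbc.2.1, hr.trans (SimpleGraph.Adj.reachable hbc.2.2)⟩

lemma comp_subset : Comp G S x ⊆ S := fun _ ⟨_, hy, _⟩ => hy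

lemma mem_of_mem_comp (hy : y ∈ Comp G S x) : x ∈ S := hy.fst

lemma mem_comp_self (hx : x ∈ S) : x ∈ Comp G S x := (mem_comp_iff hx).2 .refl

lemma conn_of_mem_comp (hy : y ∈ Comp G S x) : Conn G S x y :=
  (mem_comp_iff (mem_of_mem_comp hy)).1 hy

lemma comp_eq_of_mem (hy : y ∈ Comp G S x) : Comp G S y = Comp G S x := by
  have hx := mem_of_mem_comp hy
  ext z
  rw [mem_comp_iff (comp_subset hy), mem_comp_iff hx]
  exact ⟨(conn_of_mem_comp hy).trans, (conn_of_mem_comp hy).symm.trans⟩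

lemma comp_eq_of_not_disjoint (h : ¬Disjoint (Comp G S x) (Comp G S y)) :
    Comp G S x = Comp G S y := by
  obtain ⟨z, hzx, hzy⟩ := not_disjoint_iff.1 h
  rw [← comp_eq_of_mem hzx, comp_eq_of_mem hzy]

lemma conn_comp_self (hy : y ∈ Comp G S x) : Conn G (Comp G S x) x y := by
  have hx := mem_of_mem_comp hy
  induction conn_of_mem_comp hy with
  | refl => exact .refl
  | @tail b c hxb hbc ih =>
    exact ih ((mem_comp_iff hx).2 hxb) |>.tail
      ⟨(mem_comp_iff hx).2 hxb, (mem_comp_iff hx).2 (hxb.tail hbc), hbc.2.2⟩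

lemma conn_comp (hy : y ∈ Comp G S x) (hz : z ∈ Comp G S x) : Conn G (Comp G S x) y z :=
  (conn_comp_self hy).symm.trans (conn_comp_self hz)

lemma exists_mem_innerBoundary_of_conn (h : Conn G A w z) (hw : w ∈ W) (hz : z ∉ W) :
    ∃ b ∈ A, b ∈ InnerBoundary G W := by
  induction h using Relation.ReflTransGen.head_induction_on with
  | refl => exact absurd hw hz
  | @head a c hac _ ih =>
    by_cases hc : c ∈ W
    · exact ih hc
    · exact ⟨a, hac.1, hw, c, hc, hac.2.2⟩

end Components

section Balls

variable {W : Set V} {x y z : V} {r t : ℕ}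

lemma mem_graphBall_self : x ∈ GraphBall G x r := by
  simp [GraphBall]

lemma mem_graphBall_comm : y ∈ GraphBall G x r ↔ x ∈ GraphBall G y r := by
  simp only [GraphBall, mem_ofPred_eq, SimpleGraph.edist_comm]

lemma mem_graphBall_succ_of_adj (hy : y ∈ GraphBall G x r) (h : G.Adj y z) :
    z ∈ GraphBall G x (r + 1) :=
  calc G.edist x z ≤ G.edist x y + G.edist y z := SimpleGraph.edist_triangle
    _ ≤ r + 1 := add_le_add hy (SimpleGraph.edist_eq_one_iff_adj.2 h).le
    _ = (r + 1 : ℕ) := by push_cast; rfl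

lemma mem_graphBall_or_exists_adj (hz : z ∈ GraphBall G x (r + 1)) :
    z ∈ GraphBall G x r ∨ ∃ y ∈ GraphBall G x r, G.Adj y z := by
  have hz' : G.edist x z ≤ (r + 1 : ℕ) := hz
  obtain ⟨p, hp⟩ := SimpleGraph.exists_walk_of_edist_ne_top (ne_top_of_le_ne_top (by simp) hz')
  rw [← hp, Nat.cast_le] at hz'
  by_cases hnil : p.Nil
  · exact .inl (hnil.eq ▸ mem_graphBall_self)
  · refine .inr ⟨p.penultimate, ?_, p.adj_penultimate hnil⟩
    calc G.edist x p.penultimate ≤ p.dropLast.length := SimpleGraph.edist_le _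
      _ ≤ r := by rw [SimpleGraph.Walk.length_dropLast]; exact_mod_cast (by omega)

lemma graphBall_finite (hlf : ∀ v, (G.neighborSet v).Finite) (x : V) (r : ℕ) :
    (GraphBall G x r).Finite := by
  induction r with
  | zero =>
    refine (finite_singleton x).subset fun y hy => ?_
    have : G.edist x y = 0 := nonpos_iff_eq_zero.1 (by exact_mod_cast hy)
    exact (SimpleGraph.edist_eq_zero_iff.1 this).symm
  | succ r ih =>
    refine (ih.union (ih.biUnion fun y _ => hlf y)).subset fun z hz => ?_
    rcases mem_graphBall_or_exists_adj hz with hz | ⟨y, hy, hyz⟩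
    · exact .inl hz
    · exact .inr (mem_biUnion hy hyz)

lemma conn_graphBall (hz : z ∈ GraphBall G x r) : Conn G (GraphBall G x r) x z := by
  induction r generalizing z with
  | zero =>
    have : G.edist x z = 0 := nonpos_iff_eq_zero.1 (by exact_mod_cast hz)
    rw [SimpleGraph.edist_eq_zero_iff.1 this]
    exact .refl
  | succ r ih =>
    have hsub : GraphBall G x r ⊆ GraphBall G x (r + 1) := fun y (hy : G.edist x y ≤ r) =>
      show G.edist x y ≤ (r + 1 : ℕ) from hy.trans (by exact_mod_cast r.le_succ)
    rcases mem_graphBall_or_exists_adj hz with hz | ⟨y, hy, hyz⟩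
    · exact (ih hz).mono hsub
    · exact ((ih hy).mono hsub).tail ⟨hsub hy, mem_graphBall_succ_of_adj hy hyz, hyz⟩

lemma exists_innerBoundary_near (hx : x ∈ W) (h : ¬GraphBall G x r ⊆ W) :
    ∃ b ∈ InnerBoundary G W, x ∈ GraphBall G b r := by
  obtain ⟨z, hz, hzW⟩ := not_subset.1 h
  obtain ⟨b, hb, hbW⟩ := exists_mem_innerBoundary_of_conn (conn_graphBall hz) hx hzW
  exact ⟨b, hbW, mem_graphBall_comm.1 hb⟩

lemma disjoint_graphBall (h : ¬G.edist x y ≤ (2 * t : ℕ)) :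
    Disjoint (GraphBall G x t) (GraphBall G y t) := by
  refine disjoint_left.2 fun z hxz hyz => h ?_
  calc G.edist x y ≤ G.edist x z + G.edist z y := SimpleGraph.edist_triangle
    _ ≤ t + t := add_le_add hxz (mem_graphBall_comm.1 hyz)
    _ = (2 * t : ℕ) := by push_cast; ring

end Balls

section Branches

variable (G) in
/-- `core G S t x` is `C_{x,t}(S)`; `punctured G S t x` is `C \ C_{x,t}(S)` for the component `C`
of `x` in `S`, and its components are the branches of `x`. -/
def core (S : Set V) (t : ℕ) (x : V) : Set V := Comp G (S ∩ GraphBall G x t) x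

variable (G) in
def punctured (S : Set V) (t : ℕ) (x : V) : Set V := Comp G S x \ core G S t x

variable (G) in
def IsBranch (S : Set V) (t : ℕ) (x : V) (E : Set V) : Prop :=
  ∃ v ∈ punctured G S t x, E = Comp G (punctured G S t x) v

variable {S W E F : Set V} {t : ℕ} {x x' y z : V}

lemma mem_core_self (hx : x ∈ S) : x ∈ core G S t x := mem_comp_self ⟨hx, mem_graphBall_self⟩

lemma core_subset_graphBall : core G S t x ⊆ GraphBall G x t := fun _ hy => (comp_subset hy).2

lemma core_subset_comp : core G S t x ⊆ Comp G S x := fun _ hy =>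
  (mem_comp_iff (mem_of_mem_comp hy).1).2 ((conn_of_mem_comp hy).mono inter_subset_left)

lemma isBranch_comp (hz : z ∈ punctured G S t x) :
    IsBranch G S t x (Comp G (punctured G S t x) z) := ⟨z, hz, rfl⟩

lemma mem_punctured_of_disjoint (hx' : x' ∈ Comp G S x)
    (hdisj : Disjoint (core G S t x) (core G S t x')) : x' ∈ punctured G S t x :=
  ⟨hx', disjoint_right.1 hdisj (mem_core_self (comp_subset hx'))⟩

namespace IsBranch

lemma subset_punctured (hE : IsBranch G S t x E) : E ⊆ punctured G S t x := by
  obtain ⟨v, -, rfl⟩ := hE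
  exact comp_subset

lemma subset_comp (hE : IsBranch G S t x E) : E ⊆ Comp G S x :=
  fun _ hz => (hE.subset_punctured hz).1

lemma notMem (hx : x ∈ S) (hE : IsBranch G S t x E) : x ∉ E :=
  fun h => (hE.subset_punctured h).2 (mem_core_self hx)

lemma comp_eq (hE : IsBranch G S t x E) (hz : z ∈ E) : Comp G (punctured G S t x) z = E := by
  obtain ⟨v, -, rfl⟩ := hE
  exact comp_eq_of_mem hz

lemma eq_of_not_disjoint (hE : IsBranch G S t x E) (hF : IsBranch G S t x F)
    (h : ¬Disjoint E F) : E = F := by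
  obtain ⟨v, -, rfl⟩ := hE
  obtain ⟨w, -, rfl⟩ := hF
  exact comp_eq_of_not_disjoint h

/-- On a path in the cluster from `x` to a point of the branch, the vertex after the last core
vertex already lies in the branch. -/
lemma exists_adj_core (hE : IsBranch G S t x E) : ∃ u ∈ core G S t x, ∃ w ∈ E, G.Adj u w := by
  obtain ⟨v, hv, rfl⟩ := hE
  have hx : x ∈ S := mem_of_mem_comp hv.1
  suffices ∀ y, Conn G S x y → y ∈ punctured G S t x →
      ∃ u ∈ core G S t x, ∃ w ∈ punctured G S t x, G.Adj u w ∧ Conn G (punctured G S t x) w y by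
    obtain ⟨u, hu, w, hw, huw, hwv⟩ := this v (conn_of_mem_comp hv.1) hv
    exact ⟨u, hu, w, (mem_comp_iff hv).2 hwv.symm, huw⟩
  intro y hy
  induction hy with
  | refl => exact fun h => absurd (mem_core_self hx) h.2
  | @tail b c hxb hbc ih =>
    intro hc
    have hb : b ∈ Comp G S x := (mem_comp_iff hx).2 hxb
    by_cases hbcore : b ∈ core G S t x
    · exact ⟨b, hbcore, c, hc, hbc.2.2, .refl⟩
    · obtain ⟨u, hu, w, hw, huw, hwb⟩ := ih ⟨hb, hbcore⟩
      exact ⟨u, hu, w, hw, huw, hwb.tail ⟨⟨hb, hbcore⟩, hc, hbc.2.2⟩⟩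

lemma exists_mem_innerBoundary (hE : IsBranch G S t x E) (hEinf : E.Infinite)
    (hball : GraphBall G x (t + 1) ⊆ W) (hW : W.Finite) : ∃ b ∈ E, b ∈ InnerBoundary G W := by
  obtain ⟨u, hu, w, hw, huw⟩ := hE.exists_adj_core
  obtain ⟨z, hz, hzW⟩ := hEinf.exists_notMem_finite hW
  have hwW : w ∈ W := hball (mem_graphBall_succ_of_adj (core_subset_graphBall hu) huw)
  obtain ⟨v, -, rfl⟩ := hE
  exact exists_mem_innerBoundary_of_conn (conn_comp hw hz) hwW hzW

/-- `E` is attached to the connected core of `x'`, which avoids the core of `x`; and `E` misses the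
core of `x`, because that core is connected, contains `x` and avoids the core of `x'`. -/
lemma subset_comp_punctured (hx' : x' ∈ Comp G S x)
    (hdisj : Disjoint (core G S t x) (core G S t x')) (hE : IsBranch G S t x' E) (hxE : x ∉ E) :
    E ⊆ Comp G (punctured G S t x) x' := by
  have hx'S : x' ∈ S := comp_subset hx'
  have hcomp : Comp G S x' = Comp G S x := comp_eq_of_mem hx'
  have hcore_punct : core G S t x ⊆ punctured G S t x' := fun u hu =>
    ⟨hcomp ▸ core_subset_comp hu, disjoint_left.1 hdisj hu⟩
  have hE_core : ∀ z ∈ E, z ∉ core G S t x := by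
    intro z hz hzc
    refine hxE (hE.comp_eq hz ▸ (mem_comp_iff (hE.subset_punctured hz)).2 ?_)
    exact (conn_comp hzc (mem_core_self (mem_of_mem_comp hx'))).mono hcore_punct
  have hE_punct : E ⊆ punctured G S t x := fun z hz => ⟨hcomp ▸ hE.subset_comp hz, hE_core z hz⟩
  have hcore'_punct : core G S t x' ⊆ punctured G S t x := fun u hu =>
    ⟨hcomp ▸ core_subset_comp hu, disjoint_right.1 hdisj hu⟩
  obtain ⟨u, hu, w, hw, huw⟩ := hE.exists_adj_core
  have hx'u : Conn G (punctured G S t x) x' u :=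
    (conn_comp (mem_core_self hx'S) hu).mono hcore'_punct
  intro z hz
  refine (mem_comp_iff (mem_punctured_of_disjoint hx' hdisj)).2 ?_
  refine (hx'u.tail ⟨hcore'_punct hu, hE_punct hw, huw⟩).trans ?_
  obtain ⟨v, -, rfl⟩ := hE
  exact (conn_comp hw hz).mono hE_punct

lemma subset_of_mem (hF : IsBranch G S t x F) (hx'F : x' ∈ F)
    (hdisj : Disjoint (core G S t x) (core G S t x')) (hE : IsBranch G S t x' E) (hxE : x ∉ E) :
    E ⊆ F :=
  hF.comp_eq hx'F ▸ hE.subset_comp_punctured (hF.subset_comp hx'F) hdisj hxE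

lemma mem_of_not_disjoint (hF : IsBranch G S t x F) (hE : IsBranch G S t x' E)
    (hdisj : Disjoint (core G S t x) (core G S t x')) (hxE : x ∉ E) (h : ¬Disjoint F E) :
    x' ∈ F := by
  obtain ⟨b, hbF, hbE⟩ := not_disjoint_iff.1 h
  have hcomp : Comp G S x = Comp G S x' := comp_eq_of_not_disjoint <|
    not_disjoint_iff.2 ⟨b, hF.subset_comp hbF, hE.subset_comp hbE⟩
  have hx' : x' ∈ Comp G S x := hcomp ▸ mem_comp_self (mem_of_mem_comp (hE.subset_comp hbE))
  have hx'punct := mem_punctured_of_disjoint hx' hdisj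
  have hC : Comp G (punctured G S t x) x' = F := (isBranch_comp hx'punct).eq_of_not_disjoint hF <|
    not_disjoint_iff.2 ⟨b, hE.subset_comp_punctured hx' hdisj hxE hbE, hbF⟩
  exact hC ▸ mem_comp_self hx'punct

end IsBranch

lemma IsTrifurcation.exists_isBranch (h : IsTrifurcation G S t x) (F : Set V) (y : V) :
    ∃ E, IsBranch G S t x E ∧ E.Infinite ∧ E ≠ F ∧ y ∉ E := by
  obtain ⟨f, hf, hinj⟩ := h.2.2
  have hbr : ∀ i, IsBranch G S t x (Comp G (punctured G S t x) (f i)) := fun i =>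
    isBranch_comp (hf i).1
  obtain ⟨i, hiF, hiy⟩ := Fin.exists_not_and_not
    (P := fun i => Comp G (punctured G S t x) (f i) = F)
    (Q := fun i => y ∈ Comp G (punctured G S t x) (f i))
    (fun i j hi hj => hinj (hi.trans hj.symm))
    (fun i j hi hj => hinj ((hbr i).eq_of_not_disjoint (hbr j) (not_disjoint_iff.2 ⟨y, hi, hj⟩)))
  exact ⟨_, hbr i, (hf i).2, hiF, hiy⟩

variable (G) in
def IsMinBranch (S : Set V) (t : ℕ) (T : Set V) (x : V) (E : Set V) : Prop :=
  IsBranch G S t x E ∧ E.Infinite ∧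
    ∀ F, IsBranch G S t x F → F.Infinite → (T ∩ E).ncard ≤ (T ∩ F).ncard

lemma IsTrifurcation.exists_isMinBranch (h : IsTrifurcation G S t x) (T : Set V) :
    ∃ E, IsMinBranch G S t T x E := by
  obtain ⟨E₀, hE₀, hE₀inf, -⟩ := IsTrifurcation.exists_isBranch h ∅ x
  obtain ⟨E, ⟨hE, hEinf⟩, hmin⟩ := (measure fun E : Set V => (T ∩ E).ncard).wf.has_min
    {E | IsBranch G S t x E ∧ E.Infinite} ⟨E₀, hE₀, hE₀inf⟩
  exact ⟨E, hE, hEinf, fun F hF hFinf => not_lt.1 (hmin F ⟨hF, hFinf⟩)⟩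

end Branches

section MinimalBranches

variable {S T W E : Set V} {t : ℕ} {D : V → Set V} {x x' y : V}

/-- An infinite branch of `x` avoiding `x'` lies in `E'`, and it misses `x ∈ E'`. -/
lemma IsMinBranch.ncard_lt (hT : T.Finite) (hxT : x ∈ T) (hx : IsTrifurcation G S t x)
    (hD : IsMinBranch G S t T x E) {E' : Set V} (hE' : IsBranch G S t x' E')
    (hdisj : Disjoint (core G S t x') (core G S t x)) (hxE' : x ∈ E') :
    (T ∩ E).ncard < (T ∩ E').ncard := by
  obtain ⟨B, hB, hBinf, -, hx'B⟩ := IsTrifurcation.exists_isBranch hx ∅ x'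
  calc (T ∩ E).ncard ≤ (T ∩ B).ncard := hD.2.2 B hB hBinf
    _ < (T ∩ E').ncard := ncard_inter_lt_of_subset_of_mem hT
        (hE'.subset_of_mem hxE' hdisj hB hx'B) hxT hxE' (hB.notMem hx.1)

lemma exists_notMem_isMinBranch {O : Set V} (hT : T.Finite) (hOT : O ⊆ T) (hO : O.Nonempty)
    (htri : ∀ x ∈ T, IsTrifurcation G S t x)
    (hsep : T.Pairwise fun x y => Disjoint (core G S t x) (core G S t y))
    (hD : ∀ x ∈ T, IsMinBranch G S t T x (D x)) : ∃ x₀ ∈ O, ∀ x ∈ O, x₀ ∉ D x := by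
  obtain ⟨x₀, hx₀, hmax⟩ := exists_max_image O (fun x => (T ∩ D x).ncard) (hT.subset hOT) hO
  refine ⟨x₀, hx₀, fun x hx hx₀x => ?_⟩
  by_cases hxx₀ : x = x₀
  · exact (hD x (hOT hx)).1.notMem (htri x (hOT hx)).1 (hxx₀ ▸ hx₀x)
  · exact (hmax x hx).not_gt <| (hD x₀ (hOT hx₀)).ncard_lt hT (hOT hx₀) (htri x₀ (hOT hx₀))
      (hD x (hOT hx)).1 (hsep (hOT hx) (hOT hx₀) hxx₀) hx₀x

/-- Induction on `|T ∩ E|`: pick `x₀ ∈ T ∩ E` with `D x₀ ⊆ E` lying in no other such `D x`, and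
recurse into a branch of `x₀` other than `D x₀` that avoids `y`; it lies in `E` and every `D x`
meeting it is nested in it. -/
lemma exists_innerBoundary_gap (hW : W.Finite) (hT : T.Finite)
    (htri : ∀ x ∈ T, IsTrifurcation G S t x) (hball : ∀ x ∈ T, GraphBall G x (t + 1) ⊆ W)
    (hsep : T.Pairwise fun x y => Disjoint (core G S t x) (core G S t y))
    (hD : ∀ x ∈ T, IsMinBranch G S t T x (D x)) (hy : y ∈ T) (hE : IsBranch G S t y E)
    (hEinf : E.Infinite) :
    ∃ b ∈ E, b ∈ InnerBoundary G W ∧ ∀ x ∈ T, x ∈ E → D x ⊆ E → b ∉ D x := by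
  induction hn : (T ∩ E).ncard using Nat.strong_induction_on generalizing y E with
  | _ n ih =>
  rcases ({x ∈ T | x ∈ E ∧ D x ⊆ E} : Set V).eq_empty_or_nonempty with hO | hO
  · obtain ⟨b, hbE, hbW⟩ := hE.exists_mem_innerBoundary hEinf (hball y hy) hW
    exact ⟨b, hbE, hbW, fun x hxT hxE hDxE _ =>
      (eq_empty_iff_forall_notMem.1 hO) x ⟨hxT, hxE, hDxE⟩⟩
  obtain ⟨x₀, ⟨hx₀T, hx₀E, -⟩, hx₀D⟩ :=
    exists_notMem_isMinBranch hT (sep_subset _ _) hO htri hsep hD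
  have hyx₀ : y ≠ x₀ := fun h => hE.notMem (htri y hy).1 (h ▸ hx₀E)
  obtain ⟨E', hE', hE'inf, hE'D, hyE'⟩ := IsTrifurcation.exists_isBranch (htri x₀ hx₀T) (D x₀) y
  have hE'E : E' ⊆ E := hE.subset_of_mem hx₀E (hsep hy hx₀T hyx₀) hE' hyE'
  have hlt : (T ∩ E').ncard < n :=
    hn ▸ ncard_inter_lt_of_subset_of_mem hT hE'E hx₀T hx₀E (hE'.notMem (htri x₀ hx₀T).1)
  obtain ⟨b, hbE', hbW, hbgap⟩ := ih _ hlt hx₀T hE' hE'inf rfl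
  refine ⟨b, hE'E hbE', hbW, fun x hxT hxE hDxE hbx => ?_⟩
  have hmeet : ¬Disjoint E' (D x) := not_disjoint_iff.2 ⟨b, hbE', hbx⟩
  by_cases hxx₀ : x = x₀
  · subst hxx₀
    exact hE'D (hE'.eq_of_not_disjoint (hD x hxT).1 hmeet)
  · have hdisj := hsep hx₀T hxT (Ne.symm hxx₀)
    have hx₀x : x₀ ∉ D x := hx₀D x ⟨hxT, hxE, hDxE⟩
    have hxE' : x ∈ E' := hE'.mem_of_not_disjoint (hD x hxT).1 hdisj hx₀x hmeet
    exact hbgap x hxT hxE' (hE'.subset_of_mem hxE' hdisj (hD x hxT).1 hx₀x) hbx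

theorem ncard_le_ncard_innerBoundary (hW : W.Finite) (htri : ∀ x ∈ T, IsTrifurcation G S t x)
    (hball : ∀ x ∈ T, GraphBall G x (t + 1) ⊆ W)
    (hsep : T.Pairwise fun x y => Disjoint (core G S t x) (core G S t y)) :
    T.ncard ≤ (InnerBoundary G W).ncard := by
  have hT : T.Finite := hW.subset fun x hx => hball x hx mem_graphBall_self
  choose! D hD using fun x (hx : x ∈ T) => IsTrifurcation.exists_isMinBranch (htri x hx) T
  choose! β hβD hβW hβgap using fun x (hx : x ∈ T) =>
    exists_innerBoundary_gap hW hT htri hball hsep hD hx (hD x hx).1 (hD x hx).2.1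
  -- Otherwise `D x'` would be nested in `D x`, which `β x` avoids.
  have hmem : ∀ x ∈ T, ∀ x' ∈ T, x ≠ x' → β x = β x' → x ∈ D x' := by
    intro x hx x' hx' hne hβ
    by_contra hxD
    have hmeet : ¬Disjoint (D x) (D x') := not_disjoint_iff.2 ⟨β x, hβD x hx, hβ ▸ hβD x' hx'⟩
    have hdisj := hsep hx hx' hne
    have hx'D : x' ∈ D x := (hD x hx).1.mem_of_not_disjoint (hD x' hx').1 hdisj hxD hmeet
    exact hβgap x hx x' hx' hx'D ((hD x hx).1.subset_of_mem hx'D hdisj (hD x' hx').1 hxD)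
      (hβ ▸ hβD x' hx')
  refine ncard_le_ncard_of_injOn β hβW (fun x hx x' hx' hβ => ?_) (hW.subset fun _ hb => hb.1)
  by_contra hne
  have hlt := (hD x hx).ncard_lt hT hx (htri x hx) (hD x' hx').1 (hsep hx' hx (Ne.symm hne))
    (hmem x hx x' hx' hne hβ)
  have hlt' := (hD x' hx').ncard_lt hT hx' (htri x' hx') (hD x hx).1 (hsep hx hx' hne)
    (hmem x' hx' x hx (Ne.symm hne) hβ.symm)
  omega

end MinimalBranches

section Counting

lemma ncard_le_mul_ncard_innerBoundary {S W A : Set V} {t m' : ℕ}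
    (hlf : ∀ v, (G.neighborSet v).Finite) (hm' : ∀ x, (GraphBall G x (t + 1)).ncard ≤ m')
    (hW : W.Finite) (hAW : A ⊆ W) (htri : ∀ x ∈ A, IsTrifurcation G S t x)
    (hsep : A.Pairwise fun x y => Disjoint (core G S t x) (core G S t y)) :
    A.ncard ≤ m' * (InnerBoundary G W).ncard := by
  set A₁ := {x ∈ A | GraphBall G x (t + 1) ⊆ W}
  have h₁ : A₁.ncard ≤ (InnerBoundary G W).ncard :=
    ncard_le_ncard_innerBoundary hW (fun x hx => htri x hx.1) (fun x hx => hx.2)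
      (hsep.mono (sep_subset _ _))
  have hball : ∀ b ∈ InnerBoundary G W, (GraphBall G b (t + 1) ∩ W).ncard + 1 ≤ m' := by
    rintro b ⟨-, z, hzW, hbz⟩
    have hz : z ∈ GraphBall G b (t + 1) := mem_graphBall_succ_of_adj mem_graphBall_self hbz
    calc _ < (GraphBall G b (t + 1)).ncard :=
          ncard_lt_ncard ((ssubset_iff_of_subset inter_subset_left).2 ⟨z, hz, fun h => hzW h.2⟩)
            (graphBall_finite hlf b _)
      _ ≤ m' := hm' b
  have h₂ : (A \ A₁).ncard ≤ (m' - 1) * (InnerBoundary G W).ncard := by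
    refine ncard_le_mul_ncard_of_subset_biUnion (F := fun b => GraphBall G b (t + 1) ∩ W)
      (hW.subset fun _ hb => hb.1)
      (fun _ _ => hW.inter_of_right _) (fun b hb => by have := hball b hb; omega) ?_
    rintro x ⟨hxA, hx⟩
    obtain ⟨b, hb, hxb⟩ := exists_innerBoundary_near (hAW hxA) fun h => hx ⟨hxA, h⟩
    exact mem_biUnion hb ⟨hxb, hAW hxA⟩
  have hA : A.ncard ≤ (A \ A₁).ncard + A₁.ncard :=
    ncard_le_ncard_sdiff_add_ncard A A₁ ((hW.subset hAW).subset (sep_subset _ _))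
  rcases (InnerBoundary G W).eq_empty_or_nonempty with hB | ⟨b, hb⟩
  · rw [hB, ncard_empty] at h₁ h₂ ⊢
    omega
  · obtain ⟨n, rfl⟩ : ∃ n, m' = n + 1 := ⟨m' - 1, by have := hball b hb; omega⟩
    rw [Nat.add_sub_cancel] at h₂
    linarith

end Counting

end BurtonKeane

open BurtonKeane Set in
theorem stmt3 {V : Type*} (G : SimpleGraph V)
    (hlf : ∀ v : V, (G.neighborSet v).Finite)
    (t m m' : ℕ)
    (hm : ∀ x : V, (GraphBall G x (2 * t + 1)).ncard ≤ m)
    (hm' : ∀ x : V, (GraphBall G x (t + 1)).ncard ≤ m')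
    (S : Set V) (W : Set V) (hW : W.Finite) :
    {x ∈ W | IsTrifurcation G S t x}.ncard ≤ m * m' * (InnerBoundary G W).ncard := by
  set T := {x ∈ W | IsTrifurcation G S t x}
  obtain ⟨A, hAT, hAsep, hAnet⟩ := (hW.subset (sep_subset W _) : T.Finite).exists_maximal_separated
    (r := fun a b => G.edist a b ≤ (2 * t : ℕ))
    (fun a b h => by rwa [SimpleGraph.edist_comm]) (fun a => by simp)
  have hA : A.Finite := hW.subset fun x hx => (hAT hx).1
  have hTA : T.ncard ≤ m * A.ncard := by
    refine ncard_le_mul_ncard_of_subset_biUnion hA (fun a _ => graphBall_finite hlf a _)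
      (fun a _ => hm a) fun y hy => ?_
    obtain ⟨a, ha, hay⟩ := hAnet y hy
    exact mem_biUnion ha (hay.trans (by exact_mod_cast (2 * t).le_succ))
  have hAW : A.ncard ≤ m' * (InnerBoundary G W).ncard :=
    ncard_le_mul_ncard_innerBoundary hlf hm' hW (fun x hx => (hAT hx).1)
      (fun x hx => (hAT hx).2) (hAsep.mono' fun x y h =>
        (disjoint_graphBall h).mono core_subset_graphBall core_subset_graphBall)
  calc T.ncard ≤ m * A.ncard := hTA
    _ ≤ m * (m' * (InnerBoundary G W).ncard) := Nat.mul_le_mul_left m hAW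
    _ = m * m' * (InnerBoundary G W).ncard := (mul_assoc _ _ _).symm
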